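/- arXiv:math/0412081 — 2 statements merged into one kernel-verified Lean document; each statement's English description precedes it below -/
import Mathlib

section
/- There exists a constant c > 0 such that for every hyperbolic ball B_h(w,s) in the upper half-plane model, m_1(B_h(w,s)) ≤ c·s, where m_1 is the restriction to the upper half plane of the standard Gaussian measure on R^2. -/
open MeasureTheory Real Set

noncomputable section

/-- Open euclidean ball in `ℝ × ℝ` with center `c` and radius `r`. -/
def eBall (c : ℝ × ℝ) (r : ℝ) : Set (ℝ × ℝ) :=
  {p | (p.1 - c.1) ^ 2 + (p.2 - c.2) ^ 2 < r ^ 2}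

/-- Open hyperbolic ball (upper half-plane model) with center `w` and radius `s`,
characterized via `cosh (d_h p w) = 1 + |p - w|² / (2 p₂ w₂)`. -/
def hBall (w : ℝ × ℝ) (s : ℝ) : Set (ℝ × ℝ) :=
  {p | 0 < p.2 ∧ 1 + ((p.1 - w.1) ^ 2 + (p.2 - w.2) ^ 2) / (2 * p.2 * w.2) < Real.cosh s}

/-- The restriction to the upper half plane of the standard Gaussian measure on `ℝ²`. -/
def m1 : Measure (ℝ × ℝ) :=
  (volume.restrict {p : ℝ × ℝ | 0 < p.2}).withDensity
    (fun p => ENNReal.ofReal ((2 * π)⁻¹ * Real.exp (-(p.1 ^ 2 + p.2 ^ 2) / 2)))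

/-- The region `A = {(x,y) : x > 1, 0 < y < 1/x}`. -/
def regA : Set (ℝ × ℝ) := {p | 1 < p.1 ∧ 0 < p.2 ∧ p.2 < p.1⁻¹}

/-- Lebesgue measure restricted to `A`. -/
def m2 : Measure (ℝ × ℝ) := volume.restrict regA

/-- The measure `μ = m₁ + m₂`. -/
def mu : Measure (ℝ × ℝ) := m1 + m2

/-- The centered maximal function of a measure `ν` with respect to `μ`,
using hyperbolic balls. -/
def Mmax (μ ν : Measure (ℝ × ℝ)) (w : ℝ × ℝ) : ENNReal :=
  ⨆ (s : ℝ) (_ : 0 < s), ν (hBall w s) / μ (hBall w s)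

/-! The hyperbolic ball of radius `s` about `(a, b)` lies in the horizontal strip
`b e^{-s} < y < b e^{s}`. Since `m1` is the standard Gaussian on `ℝ²` restricted to the upper
half plane, the strip has `m1`-mass at most the one-dimensional Gaussian mass of
`(b e^{-s}, b e^{s})`, and there the Gaussian density is at most `1 / y`, whose integral over the
interval is `log (e^{2s}) = 2s`. Hence `c = 2` works. -/

open ProbabilityTheory

lemma hBall_subset_strip {w : ℝ × ℝ} {s : ℝ} (hw : 0 < w.2) (hs : 0 ≤ s) :
    hBall w s ⊆ univ ×ˢ Ioo (w.2 * exp (-s)) (w.2 * exp s) := by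
  rintro ⟨x, y⟩ ⟨hy, hlt⟩
  have hcosh : (x - w.1) ^ 2 + (y - w.2) ^ 2 < (cosh s - 1) * (2 * y * w.2) :=
    (div_lt_iff₀ (by positivity)).mp (by linarith)
  have hsum : w.2 * exp (-s) + w.2 * exp s = 2 * w.2 * cosh s := by rw [cosh_eq]; ring
  have hprod : w.2 * exp (-s) * (w.2 * exp s) = w.2 ^ 2 := by
    rw [mul_mul_mul_comm, ← exp_add, neg_add_cancel, exp_zero, mul_one, sq]
  -- `y` lies strictly between the two roots of `Y² - 2 w₂ cosh s · Y + w₂²`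
  have hroots : (y - w.2 * exp (-s)) * (y - w.2 * exp s) < 0 := by
    nlinarith [sq_nonneg (x - w.1)]
  have hle : w.2 * exp (-s) ≤ w.2 * exp s := by gcongr; linarith
  exact ⟨mem_univ x, by nlinarith, by nlinarith⟩

lemma m1_eq_restrict_gaussian_prod :
    m1 = ((gaussianReal 0 1).prod (gaussianReal 0 1)).restrict {p | 0 < p.2} := by
  have hmeas : MeasurableSet {p : ℝ × ℝ | 0 < p.2} :=
    measurableSet_lt measurable_const measurable_snd
  rw [gaussianReal_of_var_ne_zero 0 one_ne_zero, prod_withDensity (measurable_gaussianPDF 0 1)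
    (measurable_gaussianPDF 0 1), restrict_withDensity hmeas, ← Measure.volume_eq_prod, m1]
  congr 1
  ext p
  rw [gaussianPDF, gaussianPDF, ← ENNReal.ofReal_mul (gaussianPDFReal_nonneg 0 1 _),
    gaussianPDFReal, gaussianPDFReal]
  congr 1
  rw [mul_mul_mul_comm, ← mul_inv, ← exp_add, NNReal.coe_one, mul_one,
    Real.mul_self_sqrt (by positivity)]
  ring_nf

lemma m1_prod_le_gaussianReal (I : Set ℝ) : m1 (univ ×ˢ I) ≤ gaussianReal 0 1 I := by
  rw [m1_eq_restrict_gaussian_prod]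
  calc _ ≤ ((gaussianReal 0 1).prod (gaussianReal 0 1)) (univ ×ˢ I) :=
        Measure.restrict_apply_le _ _
    _ = gaussianReal 0 1 I := by rw [Measure.prod_prod, measure_univ, one_mul]

lemma gaussianPDFReal_zero_one_le_inv {y : ℝ} (hy : 0 < y) :
    gaussianPDFReal 0 1 y ≤ y⁻¹ := by
  have hexp : exp (-y ^ 2 / 2) ≤ y⁻¹ := by
    rw [le_inv_comm₀ (exp_pos _) hy, neg_div, exp_neg, inv_inv]
    nlinarith [add_one_le_exp (y ^ 2 / 2), sq_nonneg (y - 1)]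
  have hsqrt : (√(2 * π))⁻¹ ≤ 1 :=
    inv_le_one_of_one_le₀ (Real.one_le_sqrt.mpr (by linarith [pi_gt_three]))
  calc gaussianPDFReal 0 1 y = (√(2 * π))⁻¹ * exp (-y ^ 2 / 2) := by simp [gaussianPDFReal]
    _ ≤ 1 * y⁻¹ := by gcongr
    _ = y⁻¹ := one_mul _

lemma lintegral_inv_Ioo {u v : ℝ} (hu : 0 < u) (huv : u ≤ v) :
    ∫⁻ y in Ioo u v, ENNReal.ofReal y⁻¹ = ENNReal.ofReal (log (v / u)) := by
  have hint : IntegrableOn (fun y : ℝ => y⁻¹) (Ioo u v) :=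
    ((continuousOn_inv₀.mono fun y hy => (hu.trans_le hy.1).ne').integrableOn_Icc).mono_set
      Ioo_subset_Icc_self
  rw [← ofReal_integral_eq_lintegral_ofReal hint ((ae_restrict_iff' measurableSet_Ioo).mpr
      (Filter.Eventually.of_forall fun y hy => inv_nonneg.mpr (hu.trans hy.1).le)),
    ← integral_Ioc_eq_integral_Ioo, ← intervalIntegral.integral_of_le huv,
    integral_inv_of_pos hu (hu.trans_le huv)]

lemma gaussianReal_Ioo_le_log {u v : ℝ} (hu : 0 < u) (huv : u ≤ v) :
    gaussianReal 0 1 (Ioo u v) ≤ ENNReal.ofReal (log (v / u)) := by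
  rw [gaussianReal_apply 0 one_ne_zero, ← lintegral_inv_Ioo hu huv]
  exact setLIntegral_mono' measurableSet_Ioo fun y hy =>
    ENNReal.ofReal_le_ofReal (gaussianPDFReal_zero_one_le_inv (hu.trans hy.1))

theorem stmt15 :
    ∃ c : ℝ, 0 < c ∧ ∀ (w : ℝ × ℝ) (s : ℝ), 0 < w.2 → 0 < s →
      m1 (hBall w s) ≤ ENNReal.ofReal (c * s) := by
  refine ⟨2, two_pos, fun w s hw hs => ?_⟩
  have hu : 0 < w.2 * exp (-s) := by positivity
  have huv : w.2 * exp (-s) ≤ w.2 * exp s := by gcongr; linarith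
  have hlog : log (w.2 * exp s / (w.2 * exp (-s))) = 2 * s := by
    rw [mul_div_mul_left _ _ hw.ne', ← exp_sub, log_exp]; ring
  calc m1 (hBall w s) ≤ m1 (univ ×ˢ Ioo (w.2 * exp (-s)) (w.2 * exp s)) :=
        measure_mono (hBall_subset_strip hw hs.le)
    _ ≤ gaussianReal 0 1 (Ioo (w.2 * exp (-s)) (w.2 * exp s)) := m1_prod_le_gaussianReal _
    _ ≤ ENNReal.ofReal (2 * s) := hlog ▸ gaussianReal_Ioo_le_log hu huv
end
end

section
/- There exists a finite Borel measure μ' on the hyperbolic plane with linear growth (μ'(B_h(w,s)) ≤ c·s for all w, s) whose centered maximal operator is not of weak type (1,1); namely μ' = m_1 + m_2' where m_2' is Lebesgue measure restricted to A' = {(x,y) : x > 0, 0 < y < e^{-x}}. -/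
open MeasureTheory Real Set

noncomputable section

/-- The region `A' = {(x,y) : x > 0, 0 < y < e^{-x}}`. -/
def regA' : Set (ℝ × ℝ) := {p | 0 < p.1 ∧ 0 < p.2 ∧ p.2 < Real.exp (-p.1)}

/-- `μ' = m₁ +` Lebesgue measure restricted to `A'`. -/
def mu' : Measure (ℝ × ℝ) := m1 + volume.restrict regA'

/-!
Both parts of `μ'` have mass at most `1`. A hyperbolic ball `B_h(w, s)` is the Euclidean disc
with bottom `t = w₂ e^{-s}` and diameter `t (e^{2s} - 1)`, so for small `s` its area is `O(t² s²)`;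
the Gaussian factor `e^{-t²/2}` (for `m₁`), resp. the constraint `t < 1` forced by `A' ⊆ {y < 1}`,
turns this into `O(s)`.

For the failure of the weak type estimate take `ν` the unit mass at `(a + 3/2, 1)`. For `w = (x, y)`
in the box `(a + 1, a + 3/2) × (0, e^{-(a+2)}) ⊆ A'`, the ball around `w` with Euclidean top at
height `2` contains the atom. It lies to the right of `x = a`, so its Gaussian mass is at most
`e^{-a²/2}`, and it meets `A'` only in a sliver of width `O(e^{-a/2})` and height `e^{-a}`; hence its
`μ'`-measure is `O(e^{-3a/2})`. So `M ν > e^{3a/2} / 10` on a set of `μ'`-measure `≍ e^{-a}`, while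
the weak type bound would be `O(C e^{-3a/2})`; let `a → ∞`.
-/

open ProbabilityTheory

lemma mem_eBall {c p : ℝ × ℝ} {r : ℝ} :
    p ∈ eBall c r ↔ (p.1 - c.1) ^ 2 + (p.2 - c.2) ^ 2 < r ^ 2 := Iff.rfl

lemma measurableSet_eBall (c : ℝ × ℝ) (r : ℝ) : MeasurableSet (eBall c r) :=
  measurableSet_lt (by fun_prop) measurable_const

lemma measurableSet_hBall (w : ℝ × ℝ) (s : ℝ) : MeasurableSet (hBall w s) :=
  (measurableSet_lt measurable_const measurable_snd).inter
    (measurableSet_lt (by fun_prop : Measurable fun p : ℝ × ℝ =>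
      1 + ((p.1 - w.1) ^ 2 + (p.2 - w.2) ^ 2) / (2 * p.2 * w.2)) measurable_const)

lemma hBall_eq_eBall {w : ℝ × ℝ} (hw : 0 < w.2) (s : ℝ) :
    hBall w s = eBall (w.1, w.2 * cosh s) (w.2 * sinh s) := by
  have hcs : cosh s ^ 2 - sinh s ^ 2 = 1 := cosh_sq_sub_sinh_sq s
  ext p
  have key : (p.1 - w.1) ^ 2 + (p.2 - w.2 * cosh s) ^ 2 - (w.2 * sinh s) ^ 2
      = (p.1 - w.1) ^ 2 + (p.2 - w.2) ^ 2 - (cosh s - 1) * (2 * p.2 * w.2) := by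
    linear_combination w.2 ^ 2 * hcs
  rw [mem_eBall, hBall, Set.mem_ofPred_eq, ← lt_sub_iff_add_lt']
  constructor
  · rintro ⟨hp, hlt⟩
    rw [div_lt_iff₀ (by positivity)] at hlt
    linarith
  · intro hlt
    have hp : 0 < p.2 := by
      nlinarith [sq_nonneg (p.1 - w.1), sq_nonneg (p.2 - w.2), mul_pos hw (cosh_pos s)]
    refine ⟨hp, ?_⟩
    rw [div_lt_iff₀ (by positivity)]
    linarith

lemma eBall_subset_Ioo_prod_Ioo {x h r : ℝ} (hr : 0 ≤ r) :
    eBall (x, h) r ⊆ Ioo (x - r) (x + r) ×ˢ Ioo (h - r) (h + r) := by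
  intro p hp
  rw [mem_eBall] at hp
  have hx : (p.1 - x) ^ 2 < r ^ 2 := by nlinarith [sq_nonneg (p.2 - h)]
  have hy : (p.2 - h) ^ 2 < r ^ 2 := by nlinarith [sq_nonneg (p.1 - x)]
  obtain ⟨h₁, h₁'⟩ := abs_lt_of_sq_lt_sq' hx hr
  obtain ⟨h₂, h₂'⟩ := abs_lt_of_sq_lt_sq' hy hr
  exact ⟨⟨by linarith, by linarith⟩, ⟨by linarith, by linarith⟩⟩

lemma volume_Ioo_prod_Ioo (x₁ x₂ y₁ y₂ : ℝ) :
    volume (Ioo x₁ x₂ ×ˢ Ioo y₁ y₂) = ENNReal.ofReal (x₂ - x₁) * ENNReal.ofReal (y₂ - y₁) := by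
  rw [Measure.volume_eq_prod, Measure.prod_prod, Real.volume_Ioo, Real.volume_Ioo]

lemma volume_eBall_le (c : ℝ × ℝ) {r : ℝ} (hr : 0 ≤ r) :
    volume (eBall c r) ≤ ENNReal.ofReal ((2 * r) ^ 2) :=
  calc volume (eBall c r) ≤ volume (Ioo (c.1 - r) (c.1 + r) ×ˢ Ioo (c.2 - r) (c.2 + r)) :=
        measure_mono (eBall_subset_Ioo_prod_Ioo hr)
    _ = ENNReal.ofReal ((2 * r) ^ 2) := by
        rw [volume_Ioo_prod_Ioo, ← ENNReal.ofReal_mul (by linarith)]; ring_nf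

/-- Near its bottom point, a disc in the upper half-plane has width `O(√y)` at height `y`. -/
lemma sq_sub_lt_of_mem_eBall {x h r : ℝ} {p : ℝ × ℝ} (hr : 0 ≤ r) (hrh : r ≤ h)
    (hp : p ∈ eBall (x, h) r) : (p.1 - x) ^ 2 < p.2 * (h + r) := by
  obtain ⟨-, hp₂, hp₂'⟩ := eBall_subset_Ioo_prod_Ioo hr hp
  rw [mem_eBall] at hp
  nlinarith

lemma m1_le_of_forall_sq_le {B : Set (ℝ × ℝ)} (hB : MeasurableSet B) {t : ℝ}
    (ht : ∀ p ∈ B, t ^ 2 ≤ p.1 ^ 2 + p.2 ^ 2) :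
    m1 B ≤ ENNReal.ofReal ((2 * π)⁻¹ * exp (-t ^ 2 / 2)) * volume B := by
  rw [m1, withDensity_apply _ hB, ← setLIntegral_const]
  calc _ ≤ ∫⁻ p in B, ENNReal.ofReal ((2 * π)⁻¹ * exp (-(p.1 ^ 2 + p.2 ^ 2) / 2)) :=
        lintegral_mono' (Measure.restrict_mono subset_rfl Measure.restrict_le_self) le_rfl
    _ ≤ _ := setLIntegral_mono measurable_const fun p hp =>
        ENNReal.ofReal_le_ofReal <| by gcongr; linarith [ht p hp]

lemma m1_univ_le_one : m1 univ ≤ 1 := by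
  have hg : ∀ p : ℝ × ℝ, (2 * π)⁻¹ * exp (-(p.1 ^ 2 + p.2 ^ 2) / 2)
      = gaussianPDFReal 0 1 p.1 * gaussianPDFReal 0 1 p.2 := by
    intro p
    simp only [gaussianPDFReal, NNReal.coe_one, mul_one, sub_zero]
    rw [mul_mul_mul_comm, ← mul_inv, Real.mul_self_sqrt (by positivity), ← exp_add]
    ring_nf
  calc m1 univ ≤ ∫⁻ p : ℝ × ℝ, ENNReal.ofReal ((2 * π)⁻¹ * exp (-(p.1 ^ 2 + p.2 ^ 2) / 2)) := by
        rw [m1, withDensity_apply _ MeasurableSet.univ, Measure.restrict_univ]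
        exact lintegral_mono' Measure.restrict_le_self le_rfl
    _ = (∫⁻ x, ENNReal.ofReal (gaussianPDFReal 0 1 x)) *
          ∫⁻ y, ENNReal.ofReal (gaussianPDFReal 0 1 y) := by
        simp_rw [hg, ENNReal.ofReal_mul (gaussianPDFReal_nonneg _ _ _)]
        rw [Measure.volume_eq_prod]
        exact lintegral_prod_mul (measurable_gaussianPDFReal 0 1).ennreal_ofReal.aemeasurable
          (measurable_gaussianPDFReal 0 1).ennreal_ofReal.aemeasurable
    _ = 1 := by rw [lintegral_gaussianPDFReal_eq_one 0 one_ne_zero, one_mul]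

lemma volume_regA' : volume regA' = 1 := by
  have hA : regA' = regionBetween (fun _ => 0) (fun x => exp (-x)) (Ioi 0) := by
    ext p
    simp [regA', regionBetween]
  rw [hA, Measure.volume_eq_prod, volume_regionBetween_eq_lintegral aemeasurable_const
    (by fun_prop) measurableSet_Ioi]
  simp only [Pi.sub_apply, sub_zero]
  have hint : IntegrableOn (fun x => exp (-x)) (Ioi 0) := by
    simpa using exp_neg_integrableOn_Ioi 0 one_pos
  rw [← ofReal_integral_eq_lintegral_ofReal hint (ae_of_all _ fun x => (exp_pos _).le),
    integral_exp_neg_Ioi_zero, ENNReal.ofReal_one]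

lemma mu'_univ_le_two : mu' univ ≤ 2 := by
  rw [mu', Measure.add_apply, Measure.restrict_apply_univ, volume_regA', ← one_add_one_eq_two]
  gcongr
  exact m1_univ_le_one

lemma sq_exp_two_mul_sub_one_le {s : ℝ} (hs : 0 ≤ s) (hs' : s ≤ 1 / 2) :
    (exp (2 * s) - 1) ^ 2 ≤ 8 * s := by
  have h := abs_exp_sub_one_le (x := 2 * s) (by rw [abs_of_nonneg (by positivity)]; linarith)
  rw [abs_of_nonneg (by positivity : 0 ≤ 2 * s)] at h
  nlinarith [sq_abs (exp (2 * s) - 1), abs_nonneg (exp (2 * s) - 1)]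

lemma sq_mul_exp_neg_sq_div_two_le (t : ℝ) : t ^ 2 * exp (-t ^ 2 / 2) ≤ 2 := by
  have h₁ := add_one_le_exp (t ^ 2 / 2)
  have h₂ : exp (t ^ 2 / 2) * exp (-t ^ 2 / 2) = 1 := by rw [← exp_add]; ring_nf; exact exp_zero
  nlinarith [exp_pos (-t ^ 2 / 2)]

lemma two_mul_sinh_eq (s : ℝ) : 2 * sinh s = exp (-s) * (exp (2 * s) - 1) := by
  rw [sinh_eq, mul_sub, ← exp_add]
  ring_nf

section Growth

variable {w : ℝ × ℝ} {s : ℝ}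

lemma hBall_eq_eBall_exp_neg (hw : 0 < w.2) :
    hBall w s = eBall (w.1, w.2 * exp (-s) + w.2 * sinh s) (w.2 * sinh s) := by
  rw [hBall_eq_eBall hw, ← cosh_sub_sinh, mul_sub, sub_add_cancel]

lemma m1_hBall_le (hw : 0 < w.2) (hs : 0 ≤ s) (hs' : s ≤ 1 / 2) :
    m1 (hBall w s) ≤ ENNReal.ofReal (16 * s) := by
  rw [hBall_eq_eBall_exp_neg hw]
  set t := w.2 * exp (-s)
  set r := w.2 * sinh s
  have hdiam : 2 * r = t * (exp (2 * s) - 1) := by linear_combination w.2 * two_mul_sinh_eq s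
  have ht : 0 ≤ t := by positivity
  have hr : 0 ≤ r := mul_nonneg hw.le (sinh_nonneg_iff.mpr hs)
  have hbottom : ∀ p ∈ eBall (w.1, t + r) r, t ^ 2 ≤ p.1 ^ 2 + p.2 ^ 2 := fun p hp => by
    have := (eBall_subset_Ioo_prod_Ioo hr hp).2.1
    nlinarith [sq_nonneg p.1]
  calc m1 (eBall (w.1, t + r) r)
      ≤ ENNReal.ofReal ((2 * π)⁻¹ * exp (-t ^ 2 / 2)) * ENNReal.ofReal ((2 * r) ^ 2) :=
        (m1_le_of_forall_sq_le (measurableSet_eBall _ _) hbottom).trans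
          (by gcongr; exact volume_eBall_le _ hr)
    _ ≤ ENNReal.ofReal (16 * s) := by
        rw [← ENNReal.ofReal_mul (by positivity)]
        refine ENNReal.ofReal_le_ofReal ?_
        have hπ : (2 * π)⁻¹ ≤ 1 := inv_le_one_of_one_le₀ (by linarith [pi_gt_three])
        calc (2 * π)⁻¹ * exp (-t ^ 2 / 2) * (2 * r) ^ 2
            = (2 * π)⁻¹ * (t ^ 2 * exp (-t ^ 2 / 2)) * (exp (2 * s) - 1) ^ 2 := by
              rw [hdiam]; ring
          _ ≤ 1 * 2 * (8 * s) := by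
              gcongr
              · exact sq_mul_exp_neg_sq_div_two_le t
              · exact sq_exp_two_mul_sub_one_le hs hs'
          _ = 16 * s := by ring

lemma volume_hBall_inter_regA'_le (hw : 0 < w.2) (hs : 0 ≤ s) (hs' : s ≤ 1 / 2) :
    volume (hBall w s ∩ regA') ≤ ENNReal.ofReal (8 * s) := by
  rw [hBall_eq_eBall_exp_neg hw]
  set t := w.2 * exp (-s)
  set r := w.2 * sinh s
  have hdiam : 2 * r = t * (exp (2 * s) - 1) := by linear_combination w.2 * two_mul_sinh_eq s
  have hr : 0 ≤ r := mul_nonneg hw.le (sinh_nonneg_iff.mpr hs)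
  rcases (eBall (w.1, t + r) r ∩ regA').eq_empty_or_nonempty with hempty | ⟨p, hpB, hpA⟩
  · simp [hempty]
  -- a ball meeting `A' ⊆ {y < 1}` has bottom `t < 1`, so its diameter is at most `e^{2s} - 1`
  have ht : t < 1 := by
    have := (eBall_subset_Ioo_prod_Ioo hr hpB).2.1
    have := hpA.2.2.trans (exp_lt_one_iff.mpr (neg_lt_zero.mpr hpA.1))
    linarith
  calc volume (eBall (w.1, t + r) r ∩ regA')
      ≤ ENNReal.ofReal ((2 * r) ^ 2) :=
        (measure_mono inter_subset_left).trans (volume_eBall_le _ hr)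
    _ ≤ ENNReal.ofReal (8 * s) := by
        have hq : 0 ≤ exp (2 * s) - 1 := by linarith [one_le_exp (by linarith : 0 ≤ 2 * s)]
        refine ENNReal.ofReal_le_ofReal ((sq_le_sq' (by linarith) ?_).trans
          (sq_exp_two_mul_sub_one_le hs hs'))
        rw [hdiam]
        nlinarith [exp_pos (-s)]

lemma mu'_hBall_le (hw : 0 < w.2) (hs : 0 ≤ s) : mu' (hBall w s) ≤ ENNReal.ofReal (24 * s) := by
  rcases le_or_gt s (1 / 2) with hs' | hs'
  · calc mu' (hBall w s) = m1 (hBall w s) + volume (hBall w s ∩ regA') := by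
          rw [mu', Measure.add_apply, Measure.restrict_apply (measurableSet_hBall w s)]
      _ ≤ ENNReal.ofReal (16 * s) + ENNReal.ofReal (8 * s) :=
          add_le_add (m1_hBall_le hw hs hs') (volume_hBall_inter_regA'_le hw hs hs')
      _ = ENNReal.ofReal (24 * s) := by
          rw [← ENNReal.ofReal_add (by positivity) (by positivity)]; ring_nf
  · calc mu' (hBall w s) ≤ 2 := (measure_mono (subset_univ _)).trans mu'_univ_le_two
      _ ≤ ENNReal.ofReal (24 * s) := by
          rw [← ENNReal.ofReal_ofNat]; exact ENNReal.ofReal_le_ofReal (by linarith)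

end Growth

/-- The radius `log (2 / y)` puts the Euclidean top of the ball at height `2`. -/
lemma hBall_log_two_div_eq {x y : ℝ} (hy : 0 < y) :
    hBall (x, y) (log (2 / y)) = eBall (x, 1 + y ^ 2 / 4) (1 - y ^ 2 / 4) := by
  rw [hBall_eq_eBall hy, cosh_log (by positivity), sinh_log (by positivity)]
  congr 2 <;> dsimp only <;> field_simp <;> ring

lemma mem_eBall_one_sub {x y z : ℝ} (hxz : |z - x| < 1 / 2) (hy : y ^ 2 ≤ 1) :
    (z, 1) ∈ eBall (x, 1 + y ^ 2 / 4) (1 - y ^ 2 / 4) := by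
  rw [mem_eBall]
  have := (abs_lt.mp hxz)
  dsimp only
  nlinarith

section FarBall

variable {x h r b : ℝ}

lemma m1_eBall_le_of_le_sub (hb : 0 ≤ b) (hr : 0 ≤ r) (hr₁ : r ≤ 1) (hbx : b ≤ x - r) :
    m1 (eBall (x, h) r) ≤ ENNReal.ofReal (exp (-b ^ 2 / 2)) := by
  have hfar : ∀ p ∈ eBall (x, h) r, b ^ 2 ≤ p.1 ^ 2 + p.2 ^ 2 := fun p hp => by
    have := (eBall_subset_Ioo_prod_Ioo hr hp).1.1
    nlinarith [sq_nonneg p.2]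
  calc m1 (eBall (x, h) r)
      ≤ ENNReal.ofReal ((2 * π)⁻¹ * exp (-b ^ 2 / 2)) * ENNReal.ofReal ((2 * r) ^ 2) :=
        (m1_le_of_forall_sq_le (measurableSet_eBall _ _) hfar).trans
          (by gcongr; exact volume_eBall_le _ hr)
    _ ≤ ENNReal.ofReal (exp (-b ^ 2 / 2)) := by
        rw [← ENNReal.ofReal_mul (by positivity)]
        refine ENNReal.ofReal_le_ofReal ?_
        have hπ : (2 * π)⁻¹ * (2 * r) ^ 2 ≤ 1 := by
          rw [inv_mul_le_iff₀ (by positivity)]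
          nlinarith [pi_gt_three]
        nlinarith [exp_pos (-b ^ 2 / 2)]

lemma volume_eBall_inter_regA'_le (hr : 0 ≤ r) (hrh : r ≤ h) (hhr : h + r ≤ 2)
    (hbx : b ≤ x - r) :
    volume (eBall (x, h) r ∩ regA') ≤ ENNReal.ofReal (4 * exp (-(3 / 2) * b)) := by
  set δ := 2 * exp (-b / 2)
  have hδ : δ ^ 2 = 4 * exp (-b) := by
    rw [mul_pow, ← exp_nat_mul]; norm_num; ring_nf
  -- a point of `A'` to the right of `b` lies below `e^{-b}`, where the ball has width at most `2δ`
  have hsub : eBall (x, h) r ∩ regA' ⊆ Ioo (x - δ) (x + δ) ×ˢ Ioo 0 (exp (-b)) := by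
    rintro p ⟨hpB, -, hp₂, hpA⟩
    have hp₁ := (eBall_subset_Ioo_prod_Ioo hr hpB).1.1
    have hp₂' : p.2 < exp (-b) := hpA.trans (exp_lt_exp.mpr (by linarith))
    have hcusp := sq_sub_lt_of_mem_eBall hr hrh hpB
    obtain ⟨h₁, h₂⟩ := abs_lt_of_sq_lt_sq' (by nlinarith [exp_pos (-b)] : (p.1 - x) ^ 2 < δ ^ 2)
      (by positivity)
    exact ⟨⟨by linarith, by linarith⟩, hp₂, hp₂'⟩
  calc volume (eBall (x, h) r ∩ regA')
      ≤ ENNReal.ofReal (x + δ - (x - δ)) * ENNReal.ofReal (exp (-b) - 0) :=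
        (measure_mono hsub).trans_eq (volume_Ioo_prod_Ioo _ _ _ _)
    _ = ENNReal.ofReal (4 * exp (-(3 / 2) * b)) := by
        rw [← ENNReal.ofReal_mul (by linarith [exp_pos (-b / 2)])]
        congr 1
        rw [show -(3 / 2) * b = -b / 2 + -b by ring, exp_add]
        ring

end FarBall

lemma mu'_hBall_log_two_div_le {a x y : ℝ} (ha : 3 ≤ a) (hx : a + 1 ≤ x) (hy : 0 < y)
    (hy₁ : y ≤ 1) : mu' (hBall (x, y) (log (2 / y))) ≤ ENNReal.ofReal (5 * exp (-(3 / 2) * a)) := by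
  have hr : 0 ≤ 1 - y ^ 2 / 4 := by nlinarith
  have hbx : a ≤ x - (1 - y ^ 2 / 4) := by nlinarith
  rw [hBall_log_two_div_eq hy, mu', Measure.add_apply,
    Measure.restrict_apply (measurableSet_eBall _ _)]
  calc _ ≤ ENNReal.ofReal (exp (-a ^ 2 / 2)) + ENNReal.ofReal (4 * exp (-(3 / 2) * a)) :=
        add_le_add (m1_eBall_le_of_le_sub (by linarith) hr (by nlinarith) hbx)
          (volume_eBall_inter_regA'_le hr (by nlinarith) (by linarith) hbx)
    _ ≤ ENNReal.ofReal (exp (-(3 / 2) * a)) + ENNReal.ofReal (4 * exp (-(3 / 2) * a)) := by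
        gcongr
        nlinarith
    _ = ENNReal.ofReal (5 * exp (-(3 / 2) * a)) := by
        rw [← ENNReal.ofReal_add (by positivity) (by positivity)]; ring_nf

lemma div_le_Mmax {μ ν : Measure (ℝ × ℝ)} {w : ℝ × ℝ} {s : ℝ} (hs : 0 < s) :
    ν (hBall w s) / μ (hBall w s) ≤ Mmax μ ν w :=
  le_iSup₂ (f := fun s (_ : 0 < s) => ν (hBall w s) / μ (hBall w s)) s hs

lemma Ioo_prod_subset_Mmax_dirac_gt {a : ℝ} (ha : 3 ≤ a) :
    Ioo (a + 1) (a + 3 / 2) ×ˢ Ioo 0 1 ⊆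
      {w | ENNReal.ofReal (exp ((3 / 2) * a) / 10) <
        Mmax mu' (Measure.dirac (a + 3 / 2, 1)) w} := by
  rintro ⟨x, y⟩ ⟨⟨hx, hx'⟩, hy, hy₁⟩
  have hs : 0 < log (2 / y) := log_pos ((one_lt_div hy).mpr (by linarith))
  have hmem : (a + 3 / 2, 1) ∈ hBall (x, y) (log (2 / y)) := by
    rw [hBall_log_two_div_eq hy]
    exact mem_eBall_one_sub (abs_lt.mpr ⟨by linarith, by linarith⟩) (by nlinarith)
  have hball := mu'_hBall_log_two_div_le ha hx.le hy hy₁.le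
  refine lt_of_lt_of_le ?_ (div_le_Mmax hs)
  rw [Measure.dirac_apply_of_mem hmem, one_div]
  calc ENNReal.ofReal (exp ((3 / 2) * a) / 10)
      < ENNReal.ofReal ((5 * exp (-(3 / 2) * a))⁻¹) := by
        rw [ENNReal.ofReal_lt_ofReal_iff (by positivity), mul_inv, ← exp_neg, neg_mul, neg_neg]
        linarith [exp_pos ((3 / 2) * a)]
    _ = (ENNReal.ofReal (5 * exp (-(3 / 2) * a)))⁻¹ := ENNReal.ofReal_inv_of_pos (by positivity)
    _ ≤ (mu' (hBall (x, y) (log (2 / y))))⁻¹ := ENNReal.inv_le_inv.mpr hball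

lemma ofReal_le_mu'_Ioo_prod {a : ℝ} (ha : -1 ≤ a) :
    ENNReal.ofReal (exp (-(a + 2)) / 2) ≤
      mu' (Ioo (a + 1) (a + 3 / 2) ×ˢ Ioo 0 (exp (-(a + 2)))) := by
  have hA : Ioo (a + 1) (a + 3 / 2) ×ˢ Ioo 0 (exp (-(a + 2))) ⊆ regA' :=
    fun p ⟨⟨hx, hx'⟩, hy, hy'⟩ => ⟨by linarith, hy, hy'.trans (exp_lt_exp.mpr (by linarith))⟩
  calc ENNReal.ofReal (exp (-(a + 2)) / 2)
      = volume.restrict regA' (Ioo (a + 1) (a + 3 / 2) ×ˢ Ioo 0 (exp (-(a + 2)))) := by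
        rw [Measure.restrict_eq_self _ hA, volume_Ioo_prod_Ioo, ← ENNReal.ofReal_mul (by norm_num)]
        ring_nf
    _ ≤ mu' _ := by rw [mu', Measure.add_apply]; exact le_add_self

lemma not_exists_mu'_weakType :
    ¬ ∃ C : ℝ, 0 < C ∧ ∀ (ν : Measure (ℝ × ℝ)), IsFiniteMeasure ν →
      ∀ lam : ℝ, 0 < lam →
        mu' {w : ℝ × ℝ | ENNReal.ofReal lam < Mmax mu' ν w} ≤
          ENNReal.ofReal C * ν {p : ℝ × ℝ | 0 < p.2} / ENNReal.ofReal lam := by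
  rintro ⟨C, hC, hweak⟩
  have key : ∀ a, 3 ≤ a → exp (a / 2) ≤ 20 * exp 2 * C := by
    intro a ha
    set lam := exp ((3 / 2) * a) / 10
    have hν : Measure.dirac ((a + 3 / 2, 1) : ℝ × ℝ) {p : ℝ × ℝ | 0 < p.2} = 1 :=
      Measure.dirac_apply_of_mem (show (0 : ℝ) < 1 from one_pos)
    have hsub : Ioo (a + 1) (a + 3 / 2) ×ˢ Ioo 0 (exp (-(a + 2))) ⊆
        {w | ENNReal.ofReal lam < Mmax mu' (Measure.dirac (a + 3 / 2, 1)) w} :=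
      (prod_mono subset_rfl (Ioo_subset_Ioo_right (exp_lt_one_iff.mpr (by linarith)).le)).trans
        (Ioo_prod_subset_Mmax_dirac_gt ha)
    have h : ENNReal.ofReal (exp (-(a + 2)) / 2) ≤ ENNReal.ofReal (C / lam) :=
      calc _ ≤ mu' (Ioo (a + 1) (a + 3 / 2) ×ˢ Ioo 0 (exp (-(a + 2)))) :=
            ofReal_le_mu'_Ioo_prod (by linarith)
        _ ≤ _ := (measure_mono hsub).trans (hweak _ inferInstance lam (by positivity))
        _ = ENNReal.ofReal (C / lam) := by
            rw [hν, mul_one, ← ENNReal.ofReal_div_of_pos (by positivity)]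
    rw [ENNReal.ofReal_le_ofReal_iff (by positivity), le_div_iff₀ (by positivity)] at h
    calc exp (a / 2) = exp (-(a + 2)) / 2 * lam * (20 * exp 2) := by
          rw [show a / 2 = -(a + 2) + (3 / 2) * a + 2 by ring, exp_add, exp_add]; ring
      _ ≤ C * (20 * exp 2) := by gcongr
      _ = 20 * exp 2 * C := by ring
  set a := max 3 (40 * exp 2 * C)
  have h := key a (le_max_left _ _)
  linarith [add_one_le_exp (a / 2), le_max_right 3 (40 * exp 2 * C), exp_pos 2]

theorem stmt19 :
    mu' Set.univ < ⊤ ∧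
    (∃ c : ℝ, 0 < c ∧ ∀ (w : ℝ × ℝ) (s : ℝ), 0 < w.2 → 0 < s →
      mu' (hBall w s) ≤ ENNReal.ofReal (c * s)) ∧
    ¬ ∃ C : ℝ, 0 < C ∧ ∀ (ν : Measure (ℝ × ℝ)), IsFiniteMeasure ν →
      ∀ lam : ℝ, 0 < lam →
        mu' {w : ℝ × ℝ | ENNReal.ofReal lam < Mmax mu' ν w} ≤
          ENNReal.ofReal C * ν {p : ℝ × ℝ | 0 < p.2} / ENNReal.ofReal lam :=
  ⟨mu'_univ_le_two.trans_lt (by norm_num),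
    ⟨24, by norm_num, fun _ _ hw hs => mu'_hBall_le hw hs.le⟩,
    not_exists_mu'_weakType⟩
end
end
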